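/- arXiv:0803.3408 — 4 statements merged into one kernel-verified Lean document; each statement's English description precedes it below -/
import Mathlib

section
/- Let λ ≥ 0 and μ ≥ 0 with λ + μ ≤ 1 and define x_± = μ² - λ² ± √((1-(λ+μ)²)(1-(λ-μ)²)). Then x_+ < 1 if and only if λ > 0, and x_- > -1 if and only if μ > 0. -/
/-- with `x_± = μ² - λ² ± √((1-(λ+μ)²)(1-(λ-μ)²))`, one has
`x_+ < 1 ↔ λ > 0` and `x_- > -1 ↔ μ > 0`. -/
theorem stmt2 (lam mu : ℝ) (hlam : 0 ≤ lam) (hmu : 0 ≤ mu) (hsum : lam + mu ≤ 1) :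
    (mu ^ 2 - lam ^ 2 + Real.sqrt ((1 - (lam + mu) ^ 2) * (1 - (lam - mu) ^ 2)) < 1
      ↔ 0 < lam) ∧
    (-1 < mu ^ 2 - lam ^ 2 - Real.sqrt ((1 - (lam + mu) ^ 2) * (1 - (lam - mu) ^ 2))
      ↔ 0 < mu) := by
  set P : ℝ := (1 - (lam + mu) ^ 2) * (1 - (lam - mu) ^ 2) with hPdef
  have hP : 0 ≤ P := by
    apply mul_nonneg <;> nlinarith [sq_nonneg (lam - mu), sq_nonneg (lam + mu)]
  have hsq : Real.sqrt P ^ 2 = P := Real.sq_sqrt hP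
  have hsqrt_nonneg : 0 ≤ Real.sqrt P := Real.sqrt_nonneg P
  constructor
  · constructor
    · intro h
      by_contra hl
      push_neg at hl
      have hl0 : lam = 0 := le_antisymm hl hlam
      subst hl0
      have : Real.sqrt P = 1 - mu ^ 2 := by
        rw [hPdef]
        have : (1 - (0 + mu) ^ 2) * (1 - (0 - mu) ^ 2) = (1 - mu ^ 2) ^ 2 := by ring
        rw [this, Real.sqrt_sq (by nlinarith)]
      rw [this] at h
      linarith
    · intro hl
      have hkey : Real.sqrt P < 1 - mu ^ 2 + lam ^ 2 := by
        have h1 : (0:ℝ) ≤ 1 - mu ^ 2 + lam ^ 2 := by nlinarith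
        nlinarith [hsq, hsqrt_nonneg, sq_nonneg (Real.sqrt P - (1 - mu ^ 2 + lam ^ 2))]
      linarith
  · constructor
    · intro h
      by_contra hm
      push_neg at hm
      have hm0 : mu = 0 := le_antisymm hm hmu
      subst hm0
      have : Real.sqrt P = 1 - lam ^ 2 := by
        rw [hPdef]
        have : (1 - (lam + 0) ^ 2) * (1 - (lam - 0) ^ 2) = (1 - lam ^ 2) ^ 2 := by ring
        rw [this, Real.sqrt_sq (by nlinarith)]
      rw [this] at h
      linarith
    · intro hm
      have hkey : Real.sqrt P < 1 + mu ^ 2 - lam ^ 2 := by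
        have h1 : (0:ℝ) ≤ 1 + mu ^ 2 - lam ^ 2 := by nlinarith
        nlinarith [hsq, hsqrt_nonneg, sq_nonneg (Real.sqrt P - (1 + mu ^ 2 - lam ^ 2))]
      linarith
end

section
/- Define r(N) = Γ((N+1)/2)/√(Γ(N+1)). Then there is a function θ with |θ(N)| bounded such that r(N) = (2π/N)^{1/4} · 2^{-N/2} · e^{θ(N)/N} for all N ≥ 1; in particular r(N) · 2^{N/2} · (N/(2π))^{1/4} → 1 as N → ∞. -/
/-!
Write `E(N) = r(N) 2^{N/2} (N/(2π))^{1/4}`. Legendre's duplication formula turns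
`E(N)^4` into `Γ(y + 1/2)² y / Γ(y + 1)²` with `y = N/2`, and log-convexity of `Γ`
(Gautschi's inequality) squeezes this between `y / (y + 1/2) = N/(N+1) ≥ e^{-1/N}` and `1`.
Hence `θ(N) = N log E(N)` satisfies `|θ(N)| ≤ 1/4`.
-/

open Real Filter

namespace Real

theorem Gamma_add_half_sq_le_Gamma_mul_Gamma_add_one {y : ℝ} (hy : 0 < y) :
    Gamma (y + 1 / 2) ^ 2 ≤ Gamma y * Gamma (y + 1) := by
  have h := Gamma_mul_add_mul_le_rpow_Gamma_mul_rpow_Gamma hy (by linarith : 0 < y + 1)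
    (by norm_num : (0 : ℝ) < 1 / 2) (by norm_num : (0 : ℝ) < 1 / 2) (by norm_num)
  rw [show 1 / 2 * y + 1 / 2 * (y + 1) = y + 1 / 2 by ring, ← mul_rpow (by positivity)
    (by positivity), ← sqrt_eq_rpow] at h
  calc Gamma (y + 1 / 2) ^ 2 ≤ √(Gamma y * Gamma (y + 1)) ^ 2 := by gcongr
    _ = Gamma y * Gamma (y + 1) := sq_sqrt (by positivity)

theorem Gamma_add_half_sq_mul_le_Gamma_add_one_sq {y : ℝ} (hy : 0 < y) :
    Gamma (y + 1 / 2) ^ 2 * y ≤ Gamma (y + 1) ^ 2 := by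
  have h := Gamma_add_half_sq_le_Gamma_mul_Gamma_add_one hy
  rw [Gamma_add_one hy.ne'] at h ⊢
  nlinarith [Gamma_pos_of_pos hy]

theorem Gamma_add_one_sq_le_mul_Gamma_add_half_sq {y : ℝ} (hy : 0 < y + 1 / 2) :
    Gamma (y + 1) ^ 2 ≤ (y + 1 / 2) * Gamma (y + 1 / 2) ^ 2 := by
  have h := Gamma_add_half_sq_mul_le_Gamma_add_one_sq hy
  rw [show y + 1 / 2 + 1 / 2 = y + 1 by ring, Gamma_add_one hy.ne'] at h
  nlinarith

end Real

noncomputable def scaledGammaRatio (N : ℝ) : ℝ :=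
  Gamma ((N + 1) / 2) / √(Gamma (N + 1)) * (2 : ℝ) ^ (N / 2) * (N / (2 * π)) ^ ((1 : ℝ) / 4)

theorem scaledGammaRatio_pos {N : ℝ} (hN : 0 < N) : 0 < scaledGammaRatio N := by
  unfold scaledGammaRatio; positivity

theorem scaledGammaRatio_pow_four {N : ℝ} (hN : 0 < N) :
    scaledGammaRatio N ^ 4 = Gamma (N / 2 + 1 / 2) ^ 2 * (N / 2) / Gamma (N / 2 + 1) ^ 2 := by
  have hdup := Gamma_mul_Gamma_add_half ((N + 1) / 2)
  rw [show (N + 1) / 2 + 1 / 2 = N / 2 + 1 by ring, show 2 * ((N + 1) / 2) = N + 1 by ring,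
    show 1 - (N + 1) = -N by ring, rpow_neg zero_le_two] at hdup
  have hu : ((2 : ℝ) ^ (N / 2)) ^ 2 = 2 ^ N := by
    rw [← rpow_mul_natCast zero_le_two]; norm_num
  have hv : ((N / (2 * π)) ^ ((1 : ℝ) / 4)) ^ 4 = N / (2 * π) := by
    rw [← rpow_mul_natCast (by positivity)]; norm_num
  have hG : √(Gamma (N + 1)) ^ 2 = Gamma (N + 1) := sq_sqrt (by positivity)
  have hπ : √π ^ 2 = π := sq_sqrt pi_pos.le
  rw [show N / 2 + 1 / 2 = (N + 1) / 2 by ring]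
  have hGamma : Gamma (N + 1) = Gamma ((N + 1) / 2) * Gamma (N / 2 + 1) * 2 ^ N / √π := by
    rw [hdup]; field_simp
  have hE : scaledGammaRatio N ^ 4 = Gamma ((N + 1) / 2) ^ 4 / (√(Gamma (N + 1)) ^ 2) ^ 2
      * (((2 : ℝ) ^ (N / 2)) ^ 2) ^ 2 * ((N / (2 * π)) ^ ((1 : ℝ) / 4)) ^ 4 := by
    unfold scaledGammaRatio; ring
  rw [hE, hG, hu, hv, hGamma]
  have : 0 < Gamma ((N + 1) / 2) := by positivity
  have : 0 < Gamma (N / 2 + 1) := by positivity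
  field_simp
  rw [hπ]

theorem scaledGammaRatio_pow_four_le_one {N : ℝ} (hN : 0 < N) : scaledGammaRatio N ^ 4 ≤ 1 := by
  rw [scaledGammaRatio_pow_four hN, div_le_one (by positivity)]
  exact Gamma_add_half_sq_mul_le_Gamma_add_one_sq (by positivity)

theorem div_add_one_le_scaledGammaRatio_pow_four {N : ℝ} (hN : 0 < N) :
    N / (N + 1) ≤ scaledGammaRatio N ^ 4 := by
  have h := Gamma_add_one_sq_le_mul_Gamma_add_half_sq (y := N / 2) (by positivity)
  rw [scaledGammaRatio_pow_four hN, div_le_div_iff₀ (by positivity) (by positivity)]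
  have : 0 < Gamma (N / 2 + 1 / 2) := by positivity
  nlinarith

theorem abs_log_scaledGammaRatio_le {N : ℝ} (hN : 0 < N) :
    |log (scaledGammaRatio N)| ≤ 1 / (4 * N) := by
  have hE := scaledGammaRatio_pos hN
  have hupper : log (scaledGammaRatio N ^ 4) ≤ 0 :=
    log_nonpos (by positivity) (scaledGammaRatio_pow_four_le_one hN)
  have hlower : -(1 / N) ≤ log (scaledGammaRatio N ^ 4) :=
    calc -(1 / N) = 1 - (N / (N + 1))⁻¹ := by field_simp; ring
      _ ≤ log (N / (N + 1)) := one_sub_inv_le_log_of_pos (by positivity)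
      _ ≤ log (scaledGammaRatio N ^ 4) :=
        log_le_log (by positivity) (div_add_one_le_scaledGammaRatio_pow_four hN)
  rw [log_pow] at hupper hlower
  rw [abs_le, show 1 / (4 * N) = 1 / N / 4 by ring]
  push_cast at hupper hlower
  constructor <;> linarith

theorem tendsto_scaledGammaRatio_atTop : Tendsto scaledGammaRatio atTop (nhds 1) := by
  have hlog : Tendsto (fun N => log (scaledGammaRatio N)) atTop (nhds 0) := by
    refine squeeze_zero_norm' ?_ ((tendsto_inv_atTop_zero.const_mul (1 / 4)).trans (by simp))
    filter_upwards [eventually_gt_atTop 0] with N hN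
    rw [norm_eq_abs]
    exact (abs_log_scaledGammaRatio_le hN).trans_eq (by ring)
  have hexp := (continuous_exp.tendsto 0).comp hlog
  rw [exp_zero] at hexp
  refine hexp.congr' ?_
  filter_upwards [eventually_gt_atTop 0] with N hN
  exact exp_log (scaledGammaRatio_pos hN)

theorem Gamma_div_sqrt_Gamma_eq_mul_scaledGammaRatio {N : ℝ} (hN : 0 < N) :
    Gamma ((N + 1) / 2) / √(Gamma (N + 1))
      = (2 * π / N) ^ ((1 : ℝ) / 4) * (2 : ℝ) ^ (-(N / 2)) * scaledGammaRatio N := by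
  have h₁ : (2 * π / N) ^ ((1 : ℝ) / 4) * (N / (2 * π)) ^ ((1 : ℝ) / 4) = 1 := by
    rw [← mul_rpow (by positivity) (by positivity),
      show 2 * π / N * (N / (2 * π)) = 1 by field_simp, one_rpow]
  have h₂ : (2 : ℝ) ^ (-(N / 2)) * 2 ^ (N / 2) = 1 := by
    rw [← rpow_add two_pos, neg_add_cancel, rpow_zero]
  unfold scaledGammaRatio
  set r := Gamma ((N + 1) / 2) / √(Gamma (N + 1))
  linear_combination (-r * 2 ^ (-(N / 2)) * 2 ^ (N / 2)) * h₁ - r * h₂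

/-- for `r(N) = Γ((N+1)/2)/√(Γ(N+1))` there is a bounded `θ` with
`r(N) = (2π/N)^{1/4} 2^{-N/2} e^{θ(N)/N}` for `N ≥ 1`; in particular
`r(N) 2^{N/2} (N/(2π))^{1/4} → 1` as `N → ∞`. -/
theorem stmt7 :
    (∃ θ : ℝ → ℝ, ∃ M : ℝ, (∀ N : ℝ, 1 ≤ N → |θ N| ≤ M) ∧
      ∀ N : ℝ, 1 ≤ N →
        Real.Gamma ((N + 1) / 2) / Real.sqrt (Real.Gamma (N + 1))
          = (2 * π / N) ^ ((1:ℝ)/4) * (2:ℝ) ^ (-(N / 2)) * Real.exp (θ N / N)) ∧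
    Tendsto (fun N : ℝ =>
        Real.Gamma ((N + 1) / 2) / Real.sqrt (Real.Gamma (N + 1))
          * (2:ℝ) ^ (N / 2) * (N / (2 * π)) ^ ((1:ℝ)/4))
      atTop (nhds 1) := by
  refine ⟨⟨fun N => N * log (scaledGammaRatio N), 1 / 4, fun N hN => ?_, fun N hN => ?_⟩,
    tendsto_scaledGammaRatio_atTop⟩
  · have hN0 : 0 < N := by linarith
    calc |N * log (scaledGammaRatio N)| = N * |log (scaledGammaRatio N)| := by
          rw [abs_mul, abs_of_pos hN0]
      _ ≤ N * (1 / (4 * N)) := by gcongr; exact abs_log_scaledGammaRatio_le hN0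
      _ = 1 / 4 := by field_simp
  · have hN0 : 0 < N := by linarith
    rw [mul_div_cancel_left₀ _ hN0.ne', exp_log (scaledGammaRatio_pos hN0)]
    exact Gamma_div_sqrt_Gamma_eq_mul_scaledGammaRatio hN0
end

section
/- Let N ≥ 1 be an integer, N₊ = N + 1/2, a > 0, and α = N₊ a an integer. Then the binomial coefficient satisfies C(N+α, N) = (2π N₊ a)^{-1/2} · [(1+a)^{1+a}/a^a]^{N₊} · e^{θ₁/N} where θ₁ = θ₁(a, N) is bounded uniformly for a in compact subsets of (0, ∞). -/
/-!
Write `m = N + α`, so that `(N + 1/2)(1 + a) = m + 1/2` and `(N + 1/2) a = α`. Stirling's formula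
with Robbins' error bound, `log n! = n log n - n + (log (2πn))/2 + δₙ` with `0 ≤ δₙ ≤ 1/(12n)`,
applied to `m!`, `N!` and `α!`, shows that `log C(m, N)` differs from the logarithm of the
approximation by `φ(m) - φ(N) + δₘ - δ_N - δ_α`, where `φ(x) = (x + 1/2) log (x / (x + 1/2))`.
Since `φ(x) ∈ [-1/2 - 1/(4x), -1/2]`, this error is at most `1/(3N) + 1/(12α)`, and
`α ≥ N · min K` turns it into `O(1/N)` uniformly in `a ∈ K`.
-/

open Real Filter Topology
open scoped Nat

namespace Stirling

theorem log_stirlingSeq_le {n : ℕ} (hn : n ≠ 0) :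
    log (stirlingSeq n) ≤ log √π + 1 / (12 * n) := by
  obtain ⟨k, rfl⟩ := Nat.exists_eq_add_one_of_ne_zero hn
  -- Robbins' bound telescopes: `log (stirlingSeq k) - 1 / (12 k)` increases to `log √π`.
  let u : ℕ → ℝ := fun k ↦ log (stirlingSeq (k + 1)) - 1 / (12 * ((k : ℝ) + 1))
  have hmono : Monotone u := monotone_nat_of_le_succ fun k ↦ by
    have := log_stirlingSeq_sdiff_le (k + 1)
    have hsplit : (1 : ℝ) / (12 * (k + 1 : ℕ) * ((k + 1 : ℕ) + 1))
        = 1 / (12 * ((k : ℝ) + 1)) - 1 / (12 * (((k + 1 : ℕ) : ℝ) + 1)) := by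
      push_cast; field_simp; ring
    simp only [u]
    linarith
  have hlim : Tendsto u atTop (𝓝 (log √π)) := by
    have hlog := ((continuousAt_log (by positivity)).tendsto.comp
      (tendsto_stirlingSeq_sqrt_pi.comp (tendsto_add_atTop_nat 1)))
    have hinv : Tendsto (fun k : ℕ ↦ 1 / (12 * ((k : ℝ) + 1))) atTop (𝓝 0) :=
      tendsto_const_nhds.div_atTop <| (tendsto_natCast_atTop_atTop.atTop_add
        tendsto_const_nhds).const_mul_atTop (by norm_num)
    exact sub_zero (log √π) ▸ hlog.sub hinv
  have := hmono.ge_of_tendsto hlim k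
  simp only [u] at this
  push_cast
  linarith

theorem log_factorial_le_stirling {n : ℕ} (hn : n ≠ 0) :
    log n ! ≤ n * log n - n + log n / 2 + log (2 * π) / 2 + 1 / (12 * n) := by
  have hn' : (n : ℝ) ≠ 0 := by exact_mod_cast hn
  have h := log_stirlingSeq_le hn
  rw [log_stirlingSeq_formula, log_sqrt pi_pos.le, log_mul two_ne_zero hn',
    log_div hn' (exp_ne_zero 1), log_exp] at h
  rw [log_mul two_ne_zero pi_pos.ne']
  linarith

end Stirling

theorem neg_half_sub_le_add_half_mul_log_div_add_half {x : ℝ} (hx : 0 < x) :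
    -(1 / 2) - 1 / (4 * x) ≤ (x + 1 / 2) * log (x / (x + 1 / 2)) := by
  have h := one_sub_inv_le_log_of_pos (show 0 < x / (x + 1 / 2) by positivity)
  have hval : (x + 1 / 2) * (1 - (x / (x + 1 / 2))⁻¹) = -(1 / 2) - 1 / (4 * x) := by
    field_simp; ring
  rw [← hval]
  gcongr

theorem add_half_mul_log_div_add_half_le {x : ℝ} (hx : 0 < x) :
    (x + 1 / 2) * log (x / (x + 1 / 2)) ≤ -(1 / 2) := by
  have h := log_le_sub_one_of_pos (show 0 < x / (x + 1 / 2) by positivity)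
  have hval : (x + 1 / 2) * (x / (x + 1 / 2) - 1) = -(1 / 2) := by
    field_simp; ring
  rw [← hval]
  gcongr

theorem abs_log_choose_sub_le {N α : ℕ} (hN : N ≠ 0) (hα : α ≠ 0) :
    |log ((N + α).choose N) - (((N : ℝ) + α + 1 / 2) * log ((N : ℝ) + α + 1 / 2)
      - ((N : ℝ) + 1 / 2) * log ((N : ℝ) + 1 / 2) - α * log α - log (2 * π * α) / 2)|
      ≤ 1 / (3 * N) + 1 / (12 * α) := by
  have hN' : (0 : ℝ) < N := by positivity
  have hα' : (0 : ℝ) < α := by positivity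
  have hm : N + α ≠ 0 := by omega
  have hchoose : log ((N + α).choose N : ℝ) = log (N + α)! - log N ! - log α ! := by
    rw [Nat.cast_choose ℝ (Nat.le_add_right N α), Nat.add_sub_cancel_left,
      log_div (by positivity) (by positivity), log_mul (by positivity) (by positivity), sub_sub]
  have hm_lo := Stirling.le_log_factorial_stirling hm
  have hm_hi := Stirling.log_factorial_le_stirling hm
  have hN_lo := Stirling.le_log_factorial_stirling hN
  have hN_hi := Stirling.log_factorial_le_stirling hN
  have hα_lo := Stirling.le_log_factorial_stirling hα
  have hα_hi := Stirling.log_factorial_le_stirling hα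
  have hφm_lo := neg_half_sub_le_add_half_mul_log_div_add_half (x := (N : ℝ) + α) (by positivity)
  have hφm_hi := add_half_mul_log_div_add_half_le (x := (N : ℝ) + α) (by positivity)
  have hφN_lo := neg_half_sub_le_add_half_mul_log_div_add_half hN'
  have hφN_hi := add_half_mul_log_div_add_half_le hN'
  rw [log_div (by positivity) (by positivity)] at hφm_lo hφm_hi hφN_lo hφN_hi
  have h2πα : log (2 * π * α) = log (2 * π) + log α := log_mul (by positivity) hα'.ne'
  have h12 : 1 / (12 * ((N : ℝ) + α)) ≤ 1 / (12 * N) := by gcongr; linarith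
  have h4 : 1 / (4 * ((N : ℝ) + α)) ≤ 1 / (4 * N) := by gcongr; linarith
  have hsum : 1 / (3 * (N : ℝ)) = 1 / (4 * N) + 1 / (12 * N) := by field_simp; norm_num
  push_cast at hm_lo hm_hi
  rw [hchoose, h2πα, abs_le]
  constructor <;> linarith

noncomputable def binomialApprox (t a : ℝ) : ℝ :=
  (2 * π * t * a) ^ (-(1 : ℝ) / 2) * ((1 + a) ^ ((1 : ℝ) + a) / a ^ a) ^ t

theorem binomialApprox_pos {t a : ℝ} (ht : 0 < t) (ha : 0 < a) : 0 < binomialApprox t a := by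
  unfold binomialApprox
  positivity

theorem log_binomialApprox {t a : ℝ} (ht : 0 < t) (ha : 0 < a) :
    log (binomialApprox t a) = t * (1 + a) * log (t * (1 + a)) - t * log t
      - t * a * log (t * a) - log (2 * π * (t * a)) / 2 := by
  have h1a : 0 < 1 + a := by linarith
  rw [binomialApprox, log_mul (by positivity) (by positivity), log_rpow (by positivity),
    log_rpow (by positivity), log_div (by positivity) (by positivity), log_rpow h1a, log_rpow ha,
    log_mul ht.ne' h1a.ne', log_mul ht.ne' ha.ne', ← mul_assoc]
  ring

/-- for `N ≥ 1`, `N₊ = N + 1/2`, `a > 0` with `α = N₊ a` an integer,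
`C(N+α, N) = (2π N₊ a)^{-1/2} [(1+a)^{1+a}/a^a]^{N₊} e^{θ₁/N}` with `θ₁` bounded
uniformly for `a` in compact subsets of `(0,∞)`. -/
theorem stmt8 (K : Set ℝ) (hK : IsCompact K) (hKpos : K ⊆ Set.Ioi (0:ℝ)) :
    ∃ M : ℝ, ∀ (N : ℕ), 1 ≤ N → ∀ a ∈ K, ∀ α : ℕ,
      (α : ℝ) = ((N : ℝ) + 1/2) * a →
      ∃ θ₁ : ℝ, |θ₁| ≤ M ∧
        ((N + α).choose N : ℝ)
          = (2 * π * ((N : ℝ) + 1/2) * a) ^ (-(1:ℝ)/2)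
            * ((1 + a) ^ ((1:ℝ) + a) / a ^ a) ^ ((N : ℝ) + 1/2)
            * Real.exp (θ₁ / N) := by
  rcases K.eq_empty_or_nonempty with rfl | hne
  · exact ⟨0, fun N _ a ha ↦ absurd ha (Set.notMem_empty a)⟩
  obtain ⟨ε, hεK, hεmin⟩ := hK.exists_isLeast hne
  have hε : 0 < ε := hKpos hεK
  refine ⟨1 / 3 + 1 / (12 * ε), fun N hN a haK α hα ↦ ?_⟩
  have ha : 0 < a := hKpos haK
  have hN' : (0 : ℝ) < N := by positivity
  have hαN : N * ε ≤ α := by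
    rw [hα]
    gcongr
    exacts [by linarith, hεmin haK]
  have hα' : (0 : ℝ) < α := (by positivity : (0 : ℝ) < N * ε).trans_le hαN
  have hE : |log ((N + α).choose N : ℝ) - log (binomialApprox (N + 1 / 2) a)|
      ≤ 1 / (3 * N) + 1 / (12 * α) := by
    have hmid : ((N : ℝ) + 1 / 2) * (1 + a) = N + α + 1 / 2 := by rw [hα]; ring
    rw [log_binomialApprox (by positivity) ha, hmid, ← hα]
    exact abs_log_choose_sub_le (α := α) (Nat.one_le_iff_ne_zero.mp hN) (Nat.cast_ne_zero.mp hα'.ne')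
  set E := log ((N + α).choose N : ℝ) - log (binomialApprox (N + 1 / 2) a)
  refine ⟨N * E, ?_, ?_⟩
  · calc |N * E| = N * |E| := by rw [abs_mul, abs_of_pos hN']
      _ ≤ N * (1 / (3 * N) + 1 / (12 * (N * ε))) := by grw [hE, hαN]
      _ = 1 / 3 + 1 / (12 * ε) := by field_simp
  · rw [mul_div_cancel_left₀ E hN'.ne', exp_sub,
      exp_log (Nat.cast_pos.mpr (Nat.choose_pos (Nat.le_add_right N α))),
      exp_log (binomialApprox_pos (by positivity) ha)]
    unfold binomialApprox
    field_simp
end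

section
/- Stirling's formula with explicit remainder: for every real x > 0, x! = Γ(x+1) = √(2π) e^{-x} x^{x+1/2} e^{θ(x)/x} for some θ(x) with 0 ≤ θ(x) ≤ 1/12. -/
/-!
Binet's function `μ x = ∑ₙ g (x + n)`, with `g y = (y + 1/2) log (1 + 1/y) - 1`, satisfies
`Γ x = √(2π) x^(x - 1/2) e^(-x) e^(μ x)`: by summation by parts the partial sums of `μ x` differ
from the Bohr–Mollerup approximants of `log Γ x` by a sequence that tends to `log √(2π)` by
Stirling's formula for `n!`. Expanding `log (1 + 1/y)` as the `artanh` series in `1/(2y+1)` gives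
`0 ≤ g y ≤ (1/y - 1/(y+1)) / 12`, which telescopes to `0 ≤ μ x ≤ 1/(12x)`; take `θ = x μ x`.
-/

open Real Filter Finset Topology

namespace Real

noncomputable def binetTerm (y : ℝ) : ℝ := (y + 1 / 2) * log (1 + y⁻¹) - 1

noncomputable def binetFunction (x : ℝ) : ℝ := ∑' n : ℕ, binetTerm (x + n)

variable {x y : ℝ}

lemma binetTerm_eq (hy : 0 < y) : binetTerm y = (y + 1 / 2) * (log (y + 1) - log y) - 1 := by
  rw [binetTerm, show 1 + y⁻¹ = (y + 1) / y by field_simp, log_div (by positivity) hy.ne']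

lemma hasSum_binetTerm (hy : 0 < y) :
    HasSum (fun k : ℕ ↦ 1 / (2 * (k + 1 : ℕ) + 1) * ((1 / (2 * y + 1)) ^ 2) ^ (k + 1))
      (binetTerm y) := by
  let f (k : ℕ) : ℝ := 1 / (2 * k + 1) * ((1 / (2 * y + 1)) ^ 2) ^ k
  change HasSum (fun k ↦ f (k + 1)) _
  rw [hasSum_nat_add_iff]
  convert! (hasSum_log_one_add_inv hy).mul_left (y + 1 / 2) using 1
  · ext k
    dsimp only [f]
    rw [← pow_mul, pow_add]
    field
  · simp [f, binetTerm]

lemma binetTerm_nonneg (hy : 0 < y) : 0 ≤ binetTerm y :=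
  (hasSum_binetTerm hy).nonneg fun _ ↦ by positivity

/-- Bounding every coefficient `1 / (2k + 1)` by `1 / 3` leaves a geometric series. -/
lemma binetTerm_le (hy : 0 < y) : binetTerm y ≤ (y⁻¹ - (y + 1)⁻¹) / 12 := by
  set q : ℝ := (1 / (2 * y + 1)) ^ 2
  have hq1 : q < 1 := by
    simp only [q, one_div, inv_pow]
    exact inv_lt_one_of_one_lt₀ (one_lt_pow₀ (by linarith) two_ne_zero)
  have hgeom : HasSum (fun k : ℕ ↦ 1 / 3 * q ^ (k + 1)) (1 / 3 * q * (1 - q)⁻¹) := by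
    simpa only [pow_succ', mul_assoc] using
      (hasSum_geometric_of_lt_one (by positivity) hq1).mul_left (1 / 3 * q)
  calc binetTerm y ≤ 1 / 3 * q * (1 - q)⁻¹ := by
        refine hasSum_le (fun k ↦ ?_) (hasSum_binetTerm hy) hgeom
        gcongr
        push_cast
        linarith [k.cast_nonneg (α := ℝ)]
    _ = (y⁻¹ - (y + 1)⁻¹) / 12 := by
        have : 1 - q ≠ 0 := by linarith
        simp only [q]
        field_simp
        rw [show (2 * y + 1) ^ 2 - 1 = 4 * y * (y + 1) by ring]
        field

lemma sum_range_binetTerm_le (hx : 0 < x) (N : ℕ) :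
    ∑ n ∈ range N, binetTerm (x + n) ≤ x⁻¹ / 12 :=
  calc ∑ n ∈ range N, binetTerm (x + n)
      ≤ ∑ n ∈ range N, ((x + n)⁻¹ / 12 - (x + (n + 1 : ℕ))⁻¹ / 12) := by
        gcongr with n
        rw [← sub_div, Nat.cast_succ, ← add_assoc]
        exact binetTerm_le (by positivity)
    _ = x⁻¹ / 12 - (x + N)⁻¹ / 12 := by
        simpa using sum_range_sub' (fun n : ℕ ↦ (x + n)⁻¹ / 12) N
    _ ≤ x⁻¹ / 12 := by
        have : 0 ≤ (x + N)⁻¹ := by positivity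
        linarith

lemma summable_binetTerm (hx : 0 < x) : Summable fun n : ℕ ↦ binetTerm (x + n) :=
  summable_of_sum_range_le (fun _ ↦ binetTerm_nonneg (by positivity)) (sum_range_binetTerm_le hx)

lemma binetFunction_nonneg (hx : 0 < x) : 0 ≤ binetFunction x :=
  tsum_nonneg fun _ ↦ binetTerm_nonneg (by positivity)

lemma binetFunction_le (hx : 0 < x) : binetFunction x ≤ x⁻¹ / 12 :=
  tsum_le_of_sum_range_le (fun _ ↦ binetTerm_nonneg (by positivity)) (sum_range_binetTerm_le hx)

lemma sum_range_binetTerm (hx : 0 < x) (n : ℕ) :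
    ∑ m ∈ range n, binetTerm (x + m) = (x + n + 1 / 2) * log (x + n) - (x - 1 / 2) * log x - n
      - ∑ m ∈ range (n + 1), log (x + m) := by
  induction n with
  | zero =>
    simp only [range_zero, sum_empty, CharP.cast_eq_zero, add_zero, sub_zero, zero_add, range_one,
      sum_singleton]
    ring
  | succ n ih =>
    rw [sum_range_succ, ih, sum_range_succ _ (n + 1), binetTerm_eq (by positivity)]
    push_cast
    ring_nf

/-- By `Stirling.log_stirlingSeq_formula` the sequence is, for large `n`,
`log (stirlingSeq n) + log 2 / 2 + x - (n + x + 1/2) log (1 + x/n)`. -/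
lemma tendsto_stirling_correction (x : ℝ) :
    Tendsto (fun n : ℕ ↦ x * log n + log n.factorial + n + x - (x + n + 1 / 2) * log (x + n))
      atTop (𝓝 (log √(2 * π))) := by
  have hstirling : Tendsto (fun n : ℕ ↦ log (Stirling.stirlingSeq n)) atTop (𝓝 (log √π)) :=
    Stirling.tendsto_stirlingSeq_sqrt_pi.log (by positivity)
  have hlog : Tendsto (fun n : ℕ ↦ log (1 + x / n)) atTop (𝓝 0) := by
    simpa using ((tendsto_const_div_atTop_nhds_zero_nat x).const_add 1).log (by norm_num)
  have hmul : Tendsto (fun n : ℕ ↦ (n : ℝ) * log (1 + x / n)) atTop (𝓝 x) :=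
    (tendsto_mul_log_one_add_div_atTop x).comp tendsto_natCast_atTop_atTop
  have hlim : log √(2 * π) = log √π + log 2 / 2 + x - (x + (x + 1 / 2) * 0) := by
    rw [log_sqrt (by positivity), log_sqrt pi_pos.le, log_mul two_ne_zero pi_pos.ne']
    ring
  rw [hlim]
  refine (((hstirling.add_const _).add_const x).sub (hmul.add (hlog.const_mul _))).congr' ?_
  filter_upwards [tendsto_natCast_atTop_atTop.eventually_gt_atTop (max 0 (-x))] with n hn
  obtain ⟨hn, hxn⟩ := max_lt_iff.mp hn
  replace hxn : 0 < x + n := by linarith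
  rw [Stirling.log_stirlingSeq_formula, log_mul two_ne_zero hn.ne', log_div hn.ne' (exp_ne_zero 1),
    log_exp, show 1 + x / n = (x + n) / n by field, log_div hxn.ne' hn.ne']
  ring

lemma log_Gamma_eq (hx : 0 < x) :
    log (Gamma x) = log √(2 * π) + (x - 1 / 2) * log x - x + binetFunction x := by
  have hsum := (summable_binetTerm hx).hasSum.tendsto_sum_nat
  have hlim : Tendsto (BohrMollerup.logGammaSeq x) atTop
      (𝓝 (log √(2 * π) + ((x - 1 / 2) * log x - x + binetFunction x))) :=
    ((tendsto_stirling_correction x).add (hsum.const_add _)).congr fun n ↦ by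
      rw [BohrMollerup.logGammaSeq, sum_range_binetTerm hx]
      ring
  rw [tendsto_nhds_unique (BohrMollerup.tendsto_log_gamma hx) hlim]
  ring

theorem Gamma_eq_binetFunction (hx : 0 < x) :
    Gamma x = √(2 * π) * x ^ (x - 1 / 2) * exp (-x) * exp (binetFunction x) := by
  rw [← exp_log (Gamma_pos_of_pos hx), log_Gamma_eq hx, rpow_def_of_pos hx,
    ← exp_log (by positivity : 0 < √(2 * π))]
  simp only [← exp_add, log_exp]
  congr 1
  ring

end Real

/-- Stirling's formula with explicit remainder: for all `x > 0`,
`Γ(x+1) = √(2π) e^{-x} x^{x+1/2} e^{θ(x)/x}` with `0 ≤ θ(x) ≤ 1/12`. -/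
theorem stmt9 (x : ℝ) (hx : 0 < x) :
    ∃ θ : ℝ, 0 ≤ θ ∧ θ ≤ 1/12 ∧
      Real.Gamma (x + 1)
        = Real.sqrt (2 * π) * Real.exp (-x) * x ^ (x + 1/2) * Real.exp (θ / x) := by
  refine ⟨x * binetFunction x, mul_nonneg hx.le (binetFunction_nonneg hx), ?_, ?_⟩
  · calc x * binetFunction x ≤ x * (x⁻¹ / 12) := by gcongr; exact binetFunction_le hx
      _ = 1 / 12 := by field
  · rw [Gamma_add_one hx.ne', Gamma_eq_binetFunction hx, mul_div_cancel_left₀ _ hx.ne',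
      show x + 1 / 2 = x - 1 / 2 + 1 by ring, rpow_add_one hx.ne']
    ring
end
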